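/- Schmidt–Eckart–Young theorem: for a matrix A ∈ ℝ^{m×n} of rank r with singular value decomposition A = Σ_{i=1}^r σ_i ζ_i ψ_i^T (σ_1 ≥ ⋯ ≥ σ_r > 0), the truncation A_k = Σ_{i=1}^k σ_i ζ_i ψ_i^T satisfies ‖A − A_k‖_F = min{‖A − B‖_F : B ∈ ℝ^{m×n}, rank B ≤ k} = sqrt(Σ_{i=k+1}^r σ_i²). -/

import Mathlib

open Matrix Finset

/-- Frobenius norm of a real matrix. -/
noncomputable def frobNorm {m n : ℕ} (A : Matrix (Fin m) (Fin n) ℝ) : ℝ :=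
  Real.sqrt (∑ i, ∑ j, (A i j) ^ 2)

lemma sum_sq_orthonormal {r N : ℕ} (v : Fin r → Fin N → ℝ)
    (hv : ∀ i j : Fin r, v i ⬝ᵥ v j = if i = j then 1 else 0) (d : Fin r → ℝ) :
    ∑ x, (∑ i, d i * v i x) ^ 2 = ∑ i, d i ^ 2 := by
  simp only [sq, Finset.sum_mul_sum]
  rw [Finset.sum_comm]
  refine Finset.sum_congr rfl fun i _ => ?_
  rw [Finset.sum_comm]
  have h : ∀ i2 : Fin r, ∑ x, d i * v i x * (d i2 * v i2 x)
      = d i * d i2 * (v i ⬝ᵥ v i2) := by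
    intro i2
    rw [dotProduct, Finset.mul_sum]
    exact Finset.sum_congr rfl fun x _ => by ring
  simp_rw [h, hv]
  simp

lemma sey_apply {m n r : ℕ} (ζ : Fin r → Fin m → ℝ) (ψ : Fin r → Fin n → ℝ)
    (c : Fin r → ℝ) (x : Fin m) (y : Fin n) :
    (∑ i, c i • vecMulVec (ζ i) (ψ i)) x y = ∑ i, c i * ζ i x * ψ i y := by
  simp only [Matrix.sum_apply, Matrix.smul_apply, vecMulVec_apply, smul_eq_mul]
  exact Finset.sum_congr rfl fun i _ => by ring

lemma frob_sq_sum {m n r : ℕ} (ζ : Fin r → Fin m → ℝ) (ψ : Fin r → Fin n → ℝ)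
    (hζ : ∀ i j : Fin r, ζ i ⬝ᵥ ζ j = if i = j then 1 else 0)
    (hψ : ∀ i j : Fin r, ψ i ⬝ᵥ ψ j = if i = j then 1 else 0) (c : Fin r → ℝ) :
    ∑ x, ∑ y, ((∑ i, c i • vecMulVec (ζ i) (ψ i)) x y) ^ 2 = ∑ i, c i ^ 2 := by
  have h1 : ∀ x, ∑ y, ((∑ i, c i • vecMulVec (ζ i) (ψ i)) x y) ^ 2
      = ∑ i, (c i * ζ i x) ^ 2 := by
    intro x
    rw [← sum_sq_orthonormal ψ hψ (fun i => c i * ζ i x)]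
    exact Finset.sum_congr rfl fun y _ => by rw [sey_apply]
  simp_rw [h1]
  rw [Finset.sum_comm]
  refine Finset.sum_congr rfl fun i _ => ?_
  have h2 : ∑ x, ζ i x * ζ i x = 1 := by simpa [dotProduct] using hζ i i
  calc ∑ x, (c i * ζ i x) ^ 2 = c i ^ 2 * ∑ x, ζ i x * ζ i x := by
        rw [Finset.mul_sum]; exact Finset.sum_congr rfl fun x _ => by ring
    _ = c i ^ 2 := by rw [h2, mul_one]

lemma sey_mulVec {m n r : ℕ} (ζ : Fin r → Fin m → ℝ) (ψ : Fin r → Fin n → ℝ)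
    (c : Fin r → ℝ) (w : Fin n → ℝ) (x : Fin m) :
    (∑ i, c i • vecMulVec (ζ i) (ψ i)).mulVec w x = ∑ i, c i * (ψ i ⬝ᵥ w) * ζ i x := by
  simp only [mulVec, dotProduct]
  have h : ∀ y, (∑ i, c i • vecMulVec (ζ i) (ψ i)) x y * w y
      = ∑ i, c i * ζ i x * ψ i y * w y := by
    intro y; rw [sey_apply, Finset.sum_mul]
  simp_rw [h]
  rw [Finset.sum_comm]
  refine Finset.sum_congr rfl fun i _ => ?_
  simp only [dotProduct, Finset.mul_sum, Finset.sum_mul]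
  exact Finset.sum_congr rfl fun y _ => by ring

lemma filter_lt_eq_map (r k : ℕ) (h : k ≤ r) :
    (univ.filter (fun i : Fin r => (i : ℕ) < k))
      = (univ : Finset (Fin k)).map
        ⟨fun (j : Fin k) => (⟨(j : ℕ), lt_of_lt_of_le j.2 h⟩ : Fin r),
         fun a b hab => by simpa [Fin.ext_iff] using hab⟩ := by
  ext i
  simp only [mem_filter, mem_univ, true_and, Finset.mem_map,
    Function.Embedding.coeFn_mk]
  constructor
  · intro h'
    exact ⟨⟨(i : ℕ), h'⟩, by simp [Fin.ext_iff]; rfl⟩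
  · rintro ⟨j, rfl⟩
    exact j.2

lemma card_filter_lt_fin (r k : ℕ) (h : k ≤ r) :
    (univ.filter (fun i : Fin r => (i : ℕ) < k)).card = k := by
  rw [filter_lt_eq_map r k h]; simp

lemma inner_dot {n : ℕ} (x y : EuclideanSpace ℝ (Fin n)) :
    (inner ℝ x y : ℝ) = ∑ i, x i * y i := by
  simp [PiLp.inner_apply, mul_comm]

lemma bessel_dot' {n d : ℕ} (wE : Fin d → EuclideanSpace ℝ (Fin n))
    (hw : Orthonormal ℝ wE) (x : EuclideanSpace ℝ (Fin n)) :
    ∑ j, (inner ℝ (wE j) x : ℝ) ^ 2 ≤ (inner ℝ x x : ℝ) := by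
  have h := hw.sum_inner_products_le (𝕜 := ℝ) x (s := univ)
  rw [real_inner_self_eq_norm_sq]
  calc ∑ j, (inner ℝ (wE j) x : ℝ) ^ 2 = ∑ j, ‖(inner ℝ (wE j) x : ℝ)‖ ^ 2 := by
        simp [Real.norm_eq_abs, sq_abs]
    _ ≤ ‖x‖ ^ 2 := h

lemma rearrange {r k : ℕ} (hkr : k ≤ r) (σ : Fin r → ℝ) (hσpos : ∀ i, 0 < σ i)
    (hσmono : ∀ i j : Fin r, i ≤ j → σ j ≤ σ i) (t : Fin r → ℝ)
    (ht0 : ∀ i, 0 ≤ t i) (ht1 : ∀ i, t i ≤ 1) (hsum : (r : ℝ) - k ≤ ∑ i, t i) :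
    ∑ i ∈ univ.filter (fun i : Fin r => k ≤ (i : ℕ)), σ i ^ 2 ≤ ∑ i, σ i ^ 2 * t i := by
  have hFF : univ.filter (fun i : Fin r => ¬ (i : ℕ) < k)
      = univ.filter (fun i : Fin r => k ≤ (i : ℕ)) := by
    apply Finset.filter_congr; intro i _; simp [not_lt]
  rcases eq_or_lt_of_le hkr with rfl | hkr'
  · have hempty : univ.filter (fun i : Fin k => k ≤ (i : ℕ)) = ∅ := by
      ext i
      simp only [mem_filter, mem_univ, true_and, Finset.notMem_empty, iff_false]
      exact not_le.mpr i.2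
    rw [hempty]
    simp only [Finset.sum_empty]
    exact Finset.sum_nonneg fun i _ => mul_nonneg (sq_nonneg _) (ht0 i)
  · have hτpos : 0 < σ ⟨k, hkr'⟩ := hσpos _
    have hcard : ((univ.filter (fun i : Fin r => k ≤ (i : ℕ))).card : ℝ) = (r : ℝ) - k := by
      have h1 := card_filter_lt_fin r k hkr
      have h2 := Finset.card_filter_add_card_filter_not
        (s := (univ : Finset (Fin r))) (p := fun i : Fin r => (i : ℕ) < k)
      rw [hFF, h1, Finset.card_univ, Fintype.card_fin] at h2
      have h4 : (univ.filter (fun i : Fin r => k ≤ (i : ℕ))).card = r - k := by omega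
      rw [h4, Nat.cast_sub hkr]
    have hsplit : ∀ g : Fin r → ℝ, ∑ i, g i
        = ∑ i ∈ univ.filter (fun i : Fin r => (i : ℕ) < k), g i
          + ∑ i ∈ univ.filter (fun i : Fin r => k ≤ (i : ℕ)), g i := by
      intro g
      rw [← hFF]
      exact (Finset.sum_filter_add_sum_filter_not univ _ g).symm
    have hA : ∑ i ∈ univ.filter (fun i : Fin r => k ≤ (i : ℕ)), σ i ^ 2
        ≤ ∑ i ∈ univ.filter (fun i : Fin r => k ≤ (i : ℕ)), σ i ^ 2 * t i
          + σ ⟨k, hkr'⟩ ^ 2 * ∑ i ∈ univ.filter (fun i : Fin r => k ≤ (i : ℕ)), (1 - t i) := by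
      rw [Finset.mul_sum, ← Finset.sum_add_distrib]
      refine Finset.sum_le_sum fun i hi => ?_
      have hik : k ≤ (i : ℕ) := (mem_filter.mp hi).2
      have hσi : σ i ≤ σ ⟨k, hkr'⟩ := hσmono ⟨k, hkr'⟩ i (Fin.le_def.mpr hik)
      have h0i : 0 < σ i := hσpos i
      have hsq : σ i ^ 2 ≤ σ ⟨k, hkr'⟩ ^ 2 := by nlinarith
      nlinarith [mul_le_mul_of_nonneg_right hsq (by linarith [ht1 i] : (0:ℝ) ≤ 1 - t i)]
    have hB2 : ∑ i ∈ univ.filter (fun i : Fin r => k ≤ (i : ℕ)), (1 - t i)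
        ≤ ∑ i ∈ univ.filter (fun i : Fin r => (i : ℕ) < k), t i := by
      have hc1 : ∑ _i ∈ univ.filter (fun i : Fin r => k ≤ (i : ℕ)), (1 : ℝ) = (r : ℝ) - k := by
        rw [Finset.sum_const, nsmul_eq_mul, mul_one]; exact hcard
      have hd1 : ∑ i ∈ univ.filter (fun i : Fin r => k ≤ (i : ℕ)), (1 - t i)
          = ((r : ℝ) - k) - ∑ i ∈ univ.filter (fun i : Fin r => k ≤ (i : ℕ)), t i := by
        rw [Finset.sum_sub_distrib, hc1]
      have hd2 := hsplit t
      linarith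
    have hC : σ ⟨k, hkr'⟩ ^ 2 * ∑ i ∈ univ.filter (fun i : Fin r => (i : ℕ) < k), t i
        ≤ ∑ i ∈ univ.filter (fun i : Fin r => (i : ℕ) < k), σ i ^ 2 * t i := by
      rw [Finset.mul_sum]
      refine Finset.sum_le_sum fun i hi => ?_
      have hik : (i : ℕ) < k := (mem_filter.mp hi).2
      have hτi : σ ⟨k, hkr'⟩ ≤ σ i := hσmono i ⟨k, hkr'⟩ (Fin.le_def.mpr (le_of_lt hik))
      have hsq : σ ⟨k, hkr'⟩ ^ 2 ≤ σ i ^ 2 := by nlinarith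
      nlinarith [mul_le_mul_of_nonneg_right hsq (ht0 i)]
    have hB2' : σ ⟨k, hkr'⟩ ^ 2 * ∑ i ∈ univ.filter (fun i : Fin r => k ≤ (i : ℕ)), (1 - t i)
        ≤ σ ⟨k, hkr'⟩ ^ 2 * ∑ i ∈ univ.filter (fun i : Fin r => (i : ℕ) < k), t i :=
      mul_le_mul_of_nonneg_left hB2 (sq_nonneg _)
    have hfin := hsplit (fun i => σ i ^ 2 * t i)
    linarith

lemma key_ineq {m n r : ℕ} (A B : Matrix (Fin m) (Fin n) ℝ)
    (σ : Fin r → ℝ) (hσpos : ∀ i, 0 < σ i) (hσmono : ∀ i j : Fin r, i ≤ j → σ j ≤ σ i)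
    (ζ : Fin r → (Fin m → ℝ)) (ψ : Fin r → (Fin n → ℝ))
    (hζ : ∀ i j : Fin r, ζ i ⬝ᵥ ζ j = if i = j then 1 else 0)
    (hψ : ∀ i j : Fin r, ψ i ⬝ᵥ ψ j = if i = j then 1 else 0)
    (hSVD : A = ∑ i, σ i • vecMulVec (ζ i) (ψ i))
    (k : ℕ) (hkr : k ≤ r) (hrn : r ≤ n) (hB : B.rank ≤ k) :
    ∑ i ∈ univ.filter (fun i : Fin r => k ≤ (i : ℕ)), σ i ^ 2
      ≤ ∑ x, ∑ y, ((A - B) x y) ^ 2 := by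
  classical
  -- the kernel of B as a submodule of Euclidean space
  set K : Submodule ℝ (EuclideanSpace ℝ (Fin n)) :=
    Submodule.comap ((WithLp.linearEquiv 2 ℝ (Fin n → ℝ)) :
      EuclideanSpace ℝ (Fin n) →ₗ[ℝ] (Fin n → ℝ)) (LinearMap.ker B.mulVecLin) with hK
  set d := Module.finrank ℝ K with hd
  have hdker : d = Module.finrank ℝ (LinearMap.ker B.mulVecLin) := by
    rw [hd, hK, Submodule.comap_equiv_eq_map_symm]
    exact LinearEquiv.finrank_map_eq _ _
  have hnd : n ≤ d + k := by
    have h1 := LinearMap.finrank_range_add_finrank_ker B.mulVecLin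
    have h2 : Module.finrank ℝ (Fin n → ℝ) = n := by
      rw [Module.finrank_pi, Fintype.card_fin]
    rw [h2] at h1
    have h3 : Matrix.rank B = Module.finrank ℝ (LinearMap.range B.mulVecLin) := rfl
    rw [h3] at hB
    omega
  set wB := stdOrthonormalBasis ℝ K with hwB
  set wE : Fin d → EuclideanSpace ℝ (Fin n) := fun j => (wB j : EuclideanSpace ℝ (Fin n)) with hwEdef
  have hwE : Orthonormal ℝ wE := by
    rw [orthonormal_iff_ite]
    intro i j
    have h1 : (inner ℝ (wE i) (wE j) : ℝ) = (inner ℝ (wB i) (wB j) : ℝ) :=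
      (Submodule.coe_inner K (wB i) (wB j)).symm
    rw [h1]
    exact orthonormal_iff_ite.mp wB.orthonormal i j
  have hwker : ∀ j, B.mulVec (fun i => wE j i) = 0 := by
    intro j
    have h := (wB j).2
    exact LinearMap.mem_ker.mp (Submodule.mem_comap.mp h)
  -- orthonormal basis extending ψ
  set ψE : Fin r → EuclideanSpace ℝ (Fin n) :=
    fun i => (WithLp.equiv 2 (Fin n → ℝ)).symm (ψ i) with hψE
  have hψEip : ∀ i j, (inner ℝ (ψE i) (ψE j) : ℝ) = if i = j then 1 else 0 := by
    intro i j
    rw [inner_dot]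
    exact hψ i j
  obtain ⟨b, hb⟩ : ∃ b : OrthonormalBasis (Fin n) ℝ (EuclideanSpace ℝ (Fin n)),
      ∀ (l : Fin n) (h : (l : ℕ) < r), b l = ψE ⟨(l : ℕ), h⟩ := by
    have hcard : Module.finrank ℝ (EuclideanSpace ℝ (Fin n)) = Fintype.card (Fin n) := by
      simp
    set v : Fin n → EuclideanSpace ℝ (Fin n) :=
      fun l => if h : (l : ℕ) < r then ψE ⟨(l : ℕ), h⟩ else 0 with hv
    have hvo : Orthonormal ℝ (Set.restrict {l : Fin n | (l : ℕ) < r} v) := by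
      rw [orthonormal_iff_ite]
      rintro ⟨l, hl⟩ ⟨l', hl'⟩
      have hl2 : (l : ℕ) < r := hl
      have hl2' : (l' : ℕ) < r := hl'
      simp only [Set.restrict_apply, hv, Set.restrict]
      rw [dif_pos hl2, dif_pos hl2', hψEip]
      congr 1
      simp [Fin.ext_iff, Subtype.ext_iff]
    obtain ⟨b, hb'⟩ := hvo.exists_orthonormalBasis_extension_of_card_eq hcard
    refine ⟨b, fun l h => ?_⟩
    rw [hb' l h]
    simp only [hv, dif_pos h]
  -- the coefficients t i
  set t : Fin r → ℝ := fun i => ∑ j, (inner ℝ (ψE i) (wE j) : ℝ) ^ 2 with ht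
  have ht0 : ∀ i, 0 ≤ t i := fun i => Finset.sum_nonneg fun j _ => sq_nonneg _
  have ht1 : ∀ i, t i ≤ 1 := by
    intro i
    have h := bessel_dot' wE hwE (ψE i)
    have h2 : (inner ℝ (ψE i) (ψE i) : ℝ) = 1 := by rw [hψEip]; simp
    rw [h2] at h
    calc t i = ∑ j, (inner ℝ (wE j) (ψE i) : ℝ) ^ 2 :=
          Finset.sum_congr rfl fun j _ => by rw [real_inner_comm]
      _ ≤ 1 := h
  -- lower bound on ∑ t
  have hx1 : ∀ j, (inner ℝ (wE j) (wE j) : ℝ) = 1 := by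
    intro j
    have := orthonormal_iff_ite.mp hwE j j
    simpa using this
  have hpars : ∀ j, ∑ l, (inner ℝ (b l) (wE j) : ℝ) ^ 2 = 1 := by
    intro j
    calc ∑ l, (inner ℝ (b l) (wE j) : ℝ) ^ 2
        = ∑ l, (inner ℝ (wE j) (b l) : ℝ) * (inner ℝ (b l) (wE j) : ℝ) :=
          Finset.sum_congr rfl fun l _ => by rw [sq, real_inner_comm]
      _ = (inner ℝ (wE j) (wE j) : ℝ) := b.sum_inner_mul_inner _ _
      _ = 1 := hx1 j
  have hreindex : ∀ x : EuclideanSpace ℝ (Fin n),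
      ∑ i : Fin r, (inner ℝ (ψE i) x : ℝ) ^ 2
        = ∑ l ∈ univ.filter (fun l : Fin n => (l : ℕ) < r), (inner ℝ (b l) x : ℝ) ^ 2 := by
    intro x
    rw [filter_lt_eq_map n r hrn, Finset.sum_map]
    refine Finset.sum_congr rfl fun i _ => ?_
    rw [hb _ (by exact i.2)]; rfl
  have hBes_l : ∀ l : Fin n, ∑ j, (inner ℝ (b l) (wE j) : ℝ) ^ 2 ≤ 1 := by
    intro l
    have h := bessel_dot' wE hwE (b l)
    have h2 : (inner ℝ (b l) (b l) : ℝ) = 1 := by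
      rw [real_inner_self_eq_norm_sq, b.orthonormal.1 l, one_pow]
    rw [h2] at h
    calc ∑ j, (inner ℝ (b l) (wE j) : ℝ) ^ 2
        = ∑ j, (inner ℝ (wE j) (b l) : ℝ) ^ 2 :=
          Finset.sum_congr rfl fun j _ => by rw [real_inner_comm]
      _ ≤ 1 := h
  have hcardneg : ((univ.filter (fun l : Fin n => ¬ (l : ℕ) < r)).card : ℝ) = (n : ℝ) - r := by
    have h1 := card_filter_lt_fin n r hrn
    have h2 := Finset.card_filter_add_card_filter_not
      (s := (univ : Finset (Fin n))) (p := fun l : Fin n => (l : ℕ) < r)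
    rw [h1, Finset.card_univ, Fintype.card_fin] at h2
    have h4 : (univ.filter (fun l : Fin n => ¬ (l : ℕ) < r)).card = n - r := by omega
    rw [h4, Nat.cast_sub hrn]
  have hsum_t : (r : ℝ) - k ≤ ∑ i, t i := by
    have hsplitj : ∀ j, ∑ i : Fin r, (inner ℝ (ψE i) (wE j) : ℝ) ^ 2
        + ∑ l ∈ univ.filter (fun l : Fin n => ¬ (l : ℕ) < r), (inner ℝ (b l) (wE j) : ℝ) ^ 2
        = 1 := by
      intro j
      rw [hreindex (wE j),
        Finset.sum_filter_add_sum_filter_not univ (fun l : Fin n => (l : ℕ) < r)]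
      exact hpars j
    have hsumj : ∑ j : Fin d,
        (∑ i : Fin r, (inner ℝ (ψE i) (wE j) : ℝ) ^ 2
          + ∑ l ∈ univ.filter (fun l : Fin n => ¬ (l : ℕ) < r), (inner ℝ (b l) (wE j) : ℝ) ^ 2)
        = (d : ℝ) := by
      rw [Finset.sum_congr rfl fun j _ => hsplitj j]
      simp
    rw [Finset.sum_add_distrib] at hsumj
    have h3 : ∑ j : Fin d, ∑ i : Fin r, (inner ℝ (ψE i) (wE j) : ℝ) ^ 2 = ∑ i, t i :=
      Finset.sum_comm
    have h4 : ∑ j : Fin d, ∑ l ∈ univ.filter (fun l : Fin n => ¬ (l : ℕ) < r),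
          (inner ℝ (b l) (wE j) : ℝ) ^ 2
        = ∑ l ∈ univ.filter (fun l : Fin n => ¬ (l : ℕ) < r), ∑ j : Fin d,
          (inner ℝ (b l) (wE j) : ℝ) ^ 2 :=
      Finset.sum_comm
    have h5 : ∑ l ∈ univ.filter (fun l : Fin n => ¬ (l : ℕ) < r), ∑ j : Fin d,
          (inner ℝ (b l) (wE j) : ℝ) ^ 2
        ≤ ((univ.filter (fun l : Fin n => ¬ (l : ℕ) < r)).card : ℝ) := by
      calc _ ≤ ∑ _l ∈ univ.filter (fun l : Fin n => ¬ (l : ℕ) < r), (1 : ℝ) :=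
            Finset.sum_le_sum fun l _ => hBes_l l
        _ = _ := by rw [Finset.sum_const, nsmul_eq_mul, mul_one]
    have h6 : (n : ℝ) ≤ (d : ℝ) + k := by exact_mod_cast hnd
    rw [h3, h4] at hsumj
    rw [hcardneg] at h5
    linarith
  -- energy identity
  have hmain : ∀ j, ∑ x, ((A - B).mulVec (fun i => wE j i) x) ^ 2
      = ∑ i, (σ i * (inner ℝ (ψE i) (wE j) : ℝ)) ^ 2 := by
    intro j
    have hAB : (A - B).mulVec (fun i => wE j i) = A.mulVec (fun i => wE j i) := by
      rw [Matrix.sub_mulVec, hwker j, sub_zero]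
    have h1 : ∀ x, (A - B).mulVec (fun i => wE j i) x
        = ∑ i, (σ i * (inner ℝ (ψE i) (wE j) : ℝ)) * ζ i x := by
      intro x
      rw [hAB, hSVD, sey_mulVec]
      refine Finset.sum_congr rfl fun i _ => ?_
      have h2 : ψ i ⬝ᵥ (fun l => wE j l) = (inner ℝ (ψE i) (wE j) : ℝ) := by
        rw [inner_dot]; rfl
      rw [h2]
    simp_rw [h1]
    exact sum_sq_orthonormal ζ hζ _
  -- putting the chain together
  have hmid : ∑ i, σ i ^ 2 * t i
      = ∑ j, ∑ x, ((A - B).mulVec (fun i => wE j i) x) ^ 2 := by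
    calc ∑ i, σ i ^ 2 * t i
        = ∑ i, ∑ j, (σ i * (inner ℝ (ψE i) (wE j) : ℝ)) ^ 2 := by
          refine Finset.sum_congr rfl fun i _ => ?_
          rw [ht, Finset.mul_sum]
          exact Finset.sum_congr rfl fun j _ => by ring
      _ = ∑ j, ∑ i, (σ i * (inner ℝ (ψE i) (wE j) : ℝ)) ^ 2 := Finset.sum_comm
      _ = ∑ j, ∑ x, ((A - B).mulVec (fun i => wE j i) x) ^ 2 :=
          Finset.sum_congr rfl fun j _ => (hmain j).symm
  have hfinal : ∑ j, ∑ x, ((A - B).mulVec (fun i => wE j i) x) ^ 2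
      ≤ ∑ x, ∑ y, ((A - B) x y) ^ 2 := by
    rw [Finset.sum_comm]
    refine Finset.sum_le_sum fun x _ => ?_
    have h := bessel_dot' wE hwE ((WithLp.equiv 2 (Fin n → ℝ)).symm ((A - B) x))
    calc ∑ j, ((A - B).mulVec (fun i => wE j i) x) ^ 2
        = ∑ j, (inner ℝ (wE j) ((WithLp.equiv 2 (Fin n → ℝ)).symm ((A - B) x)) : ℝ) ^ 2 := by
          refine Finset.sum_congr rfl fun j _ => ?_
          congr 1
      _ ≤ (inner ℝ ((WithLp.equiv 2 (Fin n → ℝ)).symm ((A - B) x))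
            ((WithLp.equiv 2 (Fin n → ℝ)).symm ((A - B) x)) : ℝ) := h
      _ = ∑ y, ((A - B) x y) ^ 2 := by
          rw [inner_dot]
          exact Finset.sum_congr rfl fun y _ => (sq _).symm
  calc ∑ i ∈ univ.filter (fun i : Fin r => k ≤ (i : ℕ)), σ i ^ 2
      ≤ ∑ i, σ i ^ 2 * t i := rearrange hkr σ hσpos hσmono t ht0 ht1 hsum_t
    _ = ∑ j, ∑ x, ((A - B).mulVec (fun i => wE j i) x) ^ 2 := hmid
    _ ≤ ∑ x, ∑ y, ((A - B) x y) ^ 2 := hfinal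

/-- Schmidt–Eckart–Young: the rank-`k` SVD truncation is a best rank-`k`
approximation in the Frobenius norm, with error `sqrt (∑_{i>k} σ_i²)`. -/
theorem schmidt_eckart_young {m n r : ℕ}
    (A : Matrix (Fin m) (Fin n) ℝ) (hr : A.rank = r)
    (σ : Fin r → ℝ) (hσpos : ∀ i, 0 < σ i) (hσmono : ∀ i j : Fin r, i ≤ j → σ j ≤ σ i)
    (ζ : Fin r → (Fin m → ℝ)) (ψ : Fin r → (Fin n → ℝ))
    (hζ : ∀ i j : Fin r, ζ i ⬝ᵥ ζ j = if i = j then 1 else 0)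
    (hψ : ∀ i j : Fin r, ψ i ⬝ᵥ ψ j = if i = j then 1 else 0)
    (hSVD : A = ∑ i, σ i • vecMulVec (ζ i) (ψ i))
    (k : ℕ) (hk1 : 1 ≤ k) (hkr : k ≤ r)
    (Ak : Matrix (Fin m) (Fin n) ℝ)
    (hAk : Ak = ∑ i ∈ univ.filter (fun i : Fin r => (i : ℕ) < k), σ i • vecMulVec (ζ i) (ψ i)) :
    (∀ B : Matrix (Fin m) (Fin n) ℝ, B.rank ≤ k → frobNorm (A - Ak) ≤ frobNorm (A - B)) ∧
    frobNorm (A - Ak) = Real.sqrt (∑ i ∈ univ.filter (fun i : Fin r => k ≤ (i : ℕ)), (σ i) ^ 2) := by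
  classical
  have hrn : r ≤ n := by
    have h1 := A.rank_le_card_width
    rw [hr, Fintype.card_fin] at h1
    exact h1
  have hfilters : univ.filter (fun i : Fin r => ¬ (i : ℕ) < k)
      = univ.filter (fun i : Fin r => k ≤ (i : ℕ)) := by
    apply Finset.filter_congr; intro i _; simp [not_lt]
  have hAmAk : A - Ak = ∑ i : Fin r, (if k ≤ (i : ℕ) then σ i else 0) • vecMulVec (ζ i) (ψ i) := by
    have hs := Finset.sum_filter_add_sum_filter_not univ (fun i : Fin r => (i : ℕ) < k)
      (fun i => σ i • vecMulVec (ζ i) (ψ i))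
    have h2 : ∑ i : Fin r, (if k ≤ (i : ℕ) then σ i else 0) • vecMulVec (ζ i) (ψ i)
        = ∑ i ∈ univ.filter (fun i : Fin r => k ≤ (i : ℕ)), σ i • vecMulVec (ζ i) (ψ i) := by
      rw [Finset.sum_filter]
      refine Finset.sum_congr rfl fun i _ => ?_
      split <;> simp
    rw [hSVD, hAk, h2, ← hfilters, ← hs]
    exact add_sub_cancel_left _ _
  have hfrob2 : ∑ x, ∑ y, ((A - Ak) x y) ^ 2
      = ∑ i ∈ univ.filter (fun i : Fin r => k ≤ (i : ℕ)), σ i ^ 2 := by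
    rw [hAmAk, frob_sq_sum ζ ψ hζ hψ, Finset.sum_filter]
    refine Finset.sum_congr rfl fun i _ => ?_
    split <;> simp
  constructor
  · intro B hB
    simp only [frobNorm]
    apply Real.sqrt_le_sqrt
    rw [hfrob2]
    exact key_ineq A B σ hσpos hσmono ζ ψ hζ hψ hSVD k hkr hrn hB
  · simp only [frobNorm]
    rw [hfrob2]
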